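/- arXiv:quant-ph/0605030 — 9 statements merged into one kernel-verified Lean document; each statement's English description precedes it below -/
import Mathlib

section
/- Let H_I and H be complex Hilbert spaces, let ι : H_I → H be a linear isometry, let V : H → H be a unitary operator, and let P : H → H be an orthogonal projection (a self-adjoint idempotent bounded operator). For t ∈ ℕ with t ≥ 1, call a vector φ ∈ H_I t-halting if ‖P(V^t(ι φ))‖ = ‖φ‖ and P(V^{t'}(ι φ)) = 0 for every natural number t' with 1 ≤ t' < t. Then: (1) for every t, the set of t-halting vectors is a linear subspace of H_I; and (2) if φ is t-halting and ψ is t'-halting with t ≠ t', then ⟨φ, ψ⟩ = 0. -/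
/-- `THalting ι V P t φ` means: the input vector `φ` is `t`-halting, i.e. at time `t`
the projection `P` of the evolved global state has full norm (the control is exactly in
the final state), and at every earlier time `1 ≤ t' < t` the projection vanishes. -/
def THalting {H_I H : Type*} [NormedAddCommGroup H_I] [InnerProductSpace ℂ H_I]
    [NormedAddCommGroup H] [InnerProductSpace ℂ H] [CompleteSpace H]
    (ι : H_I →ₗᵢ[ℂ] H) (V : H →L[ℂ] H) (P : H →L[ℂ] H) (t : ℕ) (φ : H_I) : Prop :=
  ‖P ((V ^ t) (ι φ))‖ = ‖φ‖ ∧ ∀ t' : ℕ, 1 ≤ t' → t' < t → P ((V ^ t') (ι φ)) = 0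

/-!
Since `V` and `ι` are isometric, `‖P (V^t (ι φ))‖ = ‖φ‖` says that `V^t (ι φ)` is fixed by the
orthogonal projection `P`, so being `t`-halting is a conjunction of linear conditions on `φ`.
If `φ` is `t`-halting and `ψ` is `t'`-halting with `t < t'`, then `V^t (ι φ)` lies in the range
of `P` and `V^t (ι ψ)` in its kernel; these are orthogonal, and `V^t ∘ ι` preserves inner products.
-/

open scoped InnerProductSpace

section StarProjection

variable {𝕜 E : Type*} [RCLike 𝕜] [NormedAddCommGroup E] [InnerProductSpace 𝕜 E] [CompleteSpace E]
  {P : E →L[𝕜] E}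

lemma IsStarProjection.norm_apply_eq_norm_iff (hP : IsStarProjection P) (x : E) :
    ‖P x‖ = ‖x‖ ↔ P x = x := by
  obtain ⟨K, _, rfl⟩ := isStarProjection_iff_eq_starProjection.mp hP
  rw [← K.mem_iff_norm_starProjection, K.starProjection_eq_self_iff]

lemma IsSelfAdjoint.inner_eq_zero_of_apply_eq_self_of_apply_eq_zero (hP : IsSelfAdjoint P)
    {x y : E} (hx : P x = x) (hy : P y = 0) : ⟪x, y⟫_𝕜 = 0 := by
  rw [← hx, ← ContinuousLinearMap.coe_coe, hP.isSymmetric x y, ContinuousLinearMap.coe_coe, hy,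
    inner_zero_right]

end StarProjection

section Halting

variable {H_I H : Type*} [NormedAddCommGroup H_I] [InnerProductSpace ℂ H_I]
  [NormedAddCommGroup H] [InnerProductSpace ℂ H] (ι : H_I →ₗᵢ[ℂ] H) {V : H →L[ℂ] H}

lemma norm_pow_apply_of_norm_apply (hV : ∀ x, ‖V x‖ = ‖x‖) (t : ℕ) (x : H) :
    ‖(V ^ t) x‖ = ‖x‖ := by
  induction t with
  | zero => rfl
  | succ t ih => rw [pow_succ']; exact (hV _).trans ih

def timeEvolution (hV : ∀ x, ‖V x‖ = ‖x‖) (t : ℕ) : H_I →ₗᵢ[ℂ] H where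
  toLinearMap := (V ^ t : H →L[ℂ] H).toLinearMap ∘ₗ ι.toLinearMap
  norm_map' φ := (norm_pow_apply_of_norm_apply hV t (ι φ)).trans (ι.norm_map φ)

def haltingSubmodule (hV : ∀ x, ‖V x‖ = ‖x‖) (P : H →L[ℂ] H) (t : ℕ) : Submodule ℂ H_I :=
  LinearMap.eqLocus (P.toLinearMap ∘ₗ (timeEvolution ι hV t).toLinearMap)
      (timeEvolution ι hV t).toLinearMap ⊓
    ⨅ t' ∈ Set.Ico 1 t, LinearMap.ker (P.toLinearMap ∘ₗ (timeEvolution ι hV t').toLinearMap)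

variable [CompleteSpace H] {ι} {P : H →L[ℂ] H}

lemma tHalting_iff (hV : ∀ x, ‖V x‖ = ‖x‖) (hP : IsStarProjection P) {t : ℕ} {φ : H_I} :
    THalting ι V P t φ ↔ P (timeEvolution ι hV t φ) = timeEvolution ι hV t φ ∧
      ∀ t' : ℕ, 1 ≤ t' → t' < t → P (timeEvolution ι hV t' φ) = 0 := by
  rw [THalting, ← (timeEvolution ι hV t).norm_map φ, ← hP.norm_apply_eq_norm_iff]
  rfl

lemma mem_haltingSubmodule_iff (hV : ∀ x, ‖V x‖ = ‖x‖) (hP : IsStarProjection P)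
    {t : ℕ} {φ : H_I} : φ ∈ haltingSubmodule ι hV P t ↔ THalting ι V P t φ := by
  simp [haltingSubmodule, tHalting_iff hV hP]

lemma THalting.inner_eq_zero_of_lt (hV : ∀ x, ‖V x‖ = ‖x‖) (hP : IsStarProjection P)
    {t t' : ℕ} (ht : 1 ≤ t) (htt' : t < t') {φ ψ : H_I} (hφ : THalting ι V P t φ)
    (hψ : THalting ι V P t' ψ) : ⟪φ, ψ⟫_ℂ = 0 := by
  rw [tHalting_iff hV hP] at hφ hψ
  rw [← (timeEvolution ι hV t).inner_map_map]
  exact hP.isSelfAdjoint.inner_eq_zero_of_apply_eq_self_of_apply_eq_zero hφ.1 (hψ.2 t ht htt')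

end Halting

theorem halting_subspaces_general
    {H_I H : Type*} [NormedAddCommGroup H_I] [InnerProductSpace ℂ H_I]
    [NormedAddCommGroup H] [InnerProductSpace ℂ H] [CompleteSpace H]
    (ι : H_I →ₗᵢ[ℂ] H) (V : H →L[ℂ] H) (hV : V ∈ unitary (H →L[ℂ] H))
    (P : H →L[ℂ] H) (hP : IsIdempotentElem P) (hPsa : IsSelfAdjoint P) :
    (∀ t : ℕ, 1 ≤ t → ∃ S : Submodule ℂ H_I,
        ∀ φ : H_I, φ ∈ S ↔ THalting ι V P t φ) ∧
    (∀ t t' : ℕ, 1 ≤ t → 1 ≤ t' → t ≠ t' → ∀ φ ψ : H_I,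
        THalting ι V P t φ → THalting ι V P t' ψ → (inner ℂ φ ψ : ℂ) = 0) := by
  have hVnorm := ContinuousLinearMap.norm_map_of_mem_unitary hV
  have hPproj : IsStarProjection P := ⟨hP, hPsa⟩
  refine ⟨fun t _ ↦ ⟨haltingSubmodule ι hVnorm P t,
    fun φ ↦ mem_haltingSubmodule_iff hVnorm hPproj⟩, ?_⟩
  intro t t' ht ht' hne φ ψ hφ hψ
  rcases hne.lt_or_gt with htt' | ht't
  · exact hφ.inner_eq_zero_of_lt hVnorm hPproj ht htt' hψ
  · rw [← inner_conj_symm, hψ.inner_eq_zero_of_lt hVnorm hPproj ht' ht't hφ, map_zero]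

theorem halting_subspaces
    {H_I H : Type*} [NormedAddCommGroup H_I] [InnerProductSpace ℂ H_I] [CompleteSpace H_I]
    [NormedAddCommGroup H] [InnerProductSpace ℂ H] [CompleteSpace H]
    (ι : H_I →ₗᵢ[ℂ] H) (V : H →L[ℂ] H) (hV : V ∈ unitary (H →L[ℂ] H))
    (P : H →L[ℂ] H) (hP : IsIdempotentElem P) (hPsa : IsSelfAdjoint P) :
    (∀ t : ℕ, 1 ≤ t → ∃ S : Submodule ℂ H_I,
        ∀ φ : H_I, φ ∈ S ↔ THalting ι V P t φ) ∧
    (∀ t t' : ℕ, 1 ≤ t → 1 ≤ t' → t ≠ t' → ∀ φ ψ : H_I,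
        THalting ι V P t φ → THalting ι V P t' ψ → (inner ℂ φ ψ : ℂ) = 0) :=
  halting_subspaces_general ι V hV P hP hPsa
end

section
/- Let H be a finite-dimensional complex inner product space, let N ≥ 2 be a natural number, and let ψ_1, …, ψ_N ∈ H be vectors with ‖ψ_i‖ = 1 for every i, such that |⟨ψ_i, ψ_j⟩| < 1/(N−1) for all i ≠ j. Then dim H ≥ N. -/
/-! The Gram matrix of unit vectors with pairwise overlaps below `1 / (N - 1)` is strictly
diagonally dominant, hence nonsingular by Gershgorin's theorem, so the vectors are linearly
independent. -/

open Finset Matrix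

section

variable {𝕜 E ι : Type*} [RCLike 𝕜] [SeminormedAddCommGroup E] [InnerProductSpace 𝕜 E]
  [Fintype ι]

theorem linearIndependent_of_sum_norm_inner_lt_norm_inner_self [DecidableEq ι] {v : ι → E}
    (h : ∀ k, ∑ j ∈ univ.erase k, ‖inner 𝕜 (v k) (v j)‖ < ‖inner 𝕜 (v k) (v k)‖) :
    LinearIndependent 𝕜 v :=
  linearIndependent_of_det_gram_ne_zero (det_ne_zero_of_sum_row_lt_diag h)

theorem linearIndependent_of_norm_eq_one_of_norm_inner_lt {v : ι → E} (hnorm : ∀ i, ‖v i‖ = 1)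
    (hinner : ∀ i j, i ≠ j → ‖inner 𝕜 (v i) (v j)‖ < 1 / ((Fintype.card ι : ℝ) - 1)) :
    LinearIndependent 𝕜 v := by
  classical
  refine linearIndependent_of_sum_norm_inner_lt_norm_inner_self fun k => ?_
  have hself : ‖inner 𝕜 (v k) (v k)‖ = 1 := by
    rw [inner_self_eq_norm_sq_to_K, hnorm k]
    simp
  rw [hself]
  obtain hempty | hne := (univ.erase k).eq_empty_or_nonempty
  · simp [hempty]
  have hcard : ((Fintype.card ι : ℝ) - 1) = #(univ.erase k) := by
    rw [card_erase_of_mem (mem_univ k), card_univ, Nat.cast_pred (Fintype.card_pos_iff.mpr ⟨k⟩)]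
  have hpos : (0 : ℝ) < #(univ.erase k) := by exact_mod_cast hne.card_pos
  calc ∑ j ∈ univ.erase k, ‖inner 𝕜 (v k) (v j)‖
      < ∑ _j ∈ univ.erase k, 1 / ((Fintype.card ι : ℝ) - 1) :=
        sum_lt_sum_of_nonempty hne fun j hj => hinner k j (ne_of_mem_erase hj).symm
    _ = 1 := by
        rw [sum_const, nsmul_eq_mul, hcard]
        field_simp

end

theorem inner_product_dimension_bound_general
    {H : Type*} [NormedAddCommGroup H] [InnerProductSpace ℂ H] [FiniteDimensional ℂ H]
    (N : ℕ) (ψ : Fin N → H) (hnorm : ∀ i, ‖ψ i‖ = 1)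
    (hinner : ∀ i j, i ≠ j → ‖(inner ℂ (ψ i) (ψ j) : ℂ)‖ < 1 / ((N : ℝ) - 1)) :
    N ≤ Module.finrank ℂ H := by
  have hli : LinearIndependent ℂ ψ :=
    linearIndependent_of_norm_eq_one_of_norm_inner_lt hnorm (by simpa using hinner)
  simpa using hli.fintype_card_le_finrank

theorem inner_product_dimension_bound
    {H : Type*} [NormedAddCommGroup H] [InnerProductSpace ℂ H] [FiniteDimensional ℂ H]
    (N : ℕ) (hN : 2 ≤ N) (ψ : Fin N → H) (hnorm : ∀ i, ‖ψ i‖ = 1)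
    (hinner : ∀ i j, i ≠ j → ‖(inner ℂ (ψ i) (ψ j) : ℂ)‖ < 1 / ((N : ℝ) - 1)) :
    N ≤ Module.finrank ℂ H :=
  inner_product_dimension_bound_general N ψ hnorm hinner
end

section
/- Let H be a finite-dimensional complex inner product space with D := dim H ≥ 1, and let (W_i)_{i∈I} be a finite family of linear subspaces of H such that for all i ≠ j and all unit vectors v ∈ W_i and w ∈ W_j one has |⟨v, w⟩| < 1/D. Then ∑_{i∈I} dim W_i ≤ D. -/
/-!
Unit vectors whose pairwise inner products are small have a strictly diagonally dominant Gram
matrix, so by the Levy–Desplanques theorem they are linearly independent. With `D + 1` vectors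
and pairwise bound `1 / D` every off-diagonal row sum is below `1`; hence a space of dimension
`D` holds no more than `D` such vectors. Orthonormal bases of the subspaces `W i` together form
such a family.
-/

open Finset
open scoped InnerProductSpace

section AlmostOrthogonal

variable {𝕜 E ι : Type*} [RCLike 𝕜] [NormedAddCommGroup E] [InnerProductSpace 𝕜 E] [Fintype ι]

theorem linearIndependent_of_sum_norm_inner_lt_one [DecidableEq ι] {u : ι → E}
    (hu : ∀ k, ‖u k‖ = 1) (h : ∀ k, ∑ l ∈ univ.erase k, ‖⟪u k, u l⟫_𝕜‖ < 1) :
    LinearIndependent 𝕜 u :=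
  Matrix.linearIndependent_of_det_gram_ne_zero <| det_ne_zero_of_sum_row_lt_diag
    fun k => by simpa [inner_self_eq_norm_sq_to_K, hu] using h k

theorem linearIndependent_of_norm_inner_lt_inv {D : ℕ} (hcard : Fintype.card ι ≤ D + 1)
    {u : ι → E} (hu : ∀ k, ‖u k‖ = 1)
    (h : ∀ k l, k ≠ l → ‖⟪u k, u l⟫_𝕜‖ < 1 / (D : ℝ)) :
    LinearIndependent 𝕜 u := by
  classical
  refine linearIndependent_of_sum_norm_inner_lt_one hu fun k => ?_
  obtain hempty | hne := (univ.erase k).eq_empty_or_nonempty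
  · simp [hempty]
  have hcard_erase : ((univ.erase k).card : ℝ) ≤ D := by
    rw [card_erase_of_mem (mem_univ k), card_univ]
    exact_mod_cast Nat.sub_le_of_le_add hcard
  calc ∑ l ∈ univ.erase k, ‖⟪u k, u l⟫_𝕜‖
      < ∑ _l ∈ univ.erase k, 1 / (D : ℝ) :=
        sum_lt_sum_of_nonempty hne fun l hl => h k l (ne_of_mem_erase hl).symm
    _ = (univ.erase k).card * (1 / (D : ℝ)) := by rw [sum_const, nsmul_eq_mul]
    _ ≤ D * (1 / (D : ℝ)) := by gcongr
    _ ≤ 1 := by rw [mul_one_div]; exact div_self_le_one _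

theorem card_le_finrank_of_norm_inner_lt_inv_finrank [FiniteDimensional 𝕜 E] {u : ι → E}
    (hu : ∀ k, ‖u k‖ = 1)
    (h : ∀ k l, k ≠ l → ‖⟪u k, u l⟫_𝕜‖ < 1 / (Module.finrank 𝕜 E : ℝ)) :
    Fintype.card ι ≤ Module.finrank 𝕜 E := by
  by_contra! hlt
  obtain ⟨f⟩ := Function.Embedding.nonempty_of_card_le (α := Fin (Module.finrank 𝕜 E + 1))
    (by simpa using hlt)
  have hli : LinearIndependent 𝕜 (u ∘ f) :=
    linearIndependent_of_norm_inner_lt_inv (by simp) (fun k => hu (f k))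
      fun k l hkl => h (f k) (f l) (f.injective.ne hkl)
  simpa using hli.fintype_card_le_finrank

end AlmostOrthogonal

theorem dimension_bound_for_subspace_family
    {H : Type*} [NormedAddCommGroup H] [InnerProductSpace ℂ H] [FiniteDimensional ℂ H]
    (hD : 1 ≤ Module.finrank ℂ H)
    {I : Type*} [Fintype I] (W : I → Submodule ℂ H)
    (h : ∀ i j, i ≠ j → ∀ v ∈ W i, ∀ w ∈ W j, ‖v‖ = 1 → ‖w‖ = 1 →
        ‖(inner ℂ v w : ℂ)‖ < 1 / (Module.finrank ℂ H : ℝ)) :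
    ∑ i, Module.finrank ℂ (W i) ≤ Module.finrank ℂ H := by
  let v : (Σ i, Fin (Module.finrank ℂ (W i))) → H := fun x => stdOrthonormalBasis ℂ (W x.1) x.2
  have hv : ∀ x, ‖v x‖ = 1 := fun x => (stdOrthonormalBasis ℂ (W x.1)).orthonormal.1 x.2
  have hpair : ∀ x y, x ≠ y → ‖⟪v x, v y⟫_ℂ‖ < 1 / (Module.finrank ℂ H : ℝ) := by
    rintro ⟨i, k⟩ ⟨j, l⟩ hxy
    by_cases hij : i = j
    · subst hij
      have hkl : k ≠ l := fun hkl => hxy (by rw [hkl])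
      have hzero : ⟪v ⟨i, k⟩, v ⟨i, l⟩⟫_ℂ = 0 := (stdOrthonormalBasis ℂ (W i)).orthonormal.2 hkl
      rw [hzero, norm_zero]
      exact one_div_pos.mpr (by exact_mod_cast hD)
    · exact h i j hij _ (SetLike.coe_mem _) _ (SetLike.coe_mem _) (hv _) (hv _)
  simpa using card_le_finrank_of_norm_inner_lt_inv_finrank hv hpair
end

section
/- Let H be a finite-dimensional complex inner product space, let V and W be linear subspaces of H with d := dim V ≥ 2, and let ε be a real number with 0 < ε ≤ 1/(4(d−1)²). Suppose that for every v ∈ V with ‖v‖ = 1 there exists w ∈ W with ‖w‖ = 1 and ‖v − w‖ ≤ ε. Then dim W ≥ dim V. -/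
theorem dimension_bound_for_similar_subspaces
    {H : Type*} [NormedAddCommGroup H] [InnerProductSpace ℂ H] [FiniteDimensional ℂ H]
    (V W : Submodule ℂ H) (hd : 2 ≤ Module.finrank ℂ V)
    (ε : ℝ) (hε0 : 0 < ε)
    (hε : ε ≤ 1 / (4 * ((Module.finrank ℂ V : ℝ) - 1) ^ 2))
    (h : ∀ v ∈ V, ‖v‖ = 1 → ∃ w ∈ W, ‖w‖ = 1 ∧ ‖v - w‖ ≤ ε) :
    Module.finrank ℂ V ≤ Module.finrank ℂ W := by
  by_contra hlt
  push_neg at hlt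
  -- V ⊓ Wᗮ is nontrivial
  have hdim : 0 < Module.finrank ℂ (V ⊓ Wᗮ : Submodule ℂ H) := by
    have h1 := Submodule.finrank_sup_add_finrank_inf_eq V Wᗮ
    have h2 : Module.finrank ℂ W + Module.finrank ℂ Wᗮ = Module.finrank ℂ H :=
      Submodule.finrank_add_finrank_orthogonal W
    have h3 : Module.finrank ℂ (V ⊔ Wᗮ : Submodule ℂ H) ≤ Module.finrank ℂ H :=
      Submodule.finrank_le _
    omega
  obtain ⟨u, hu, hune⟩ : ∃ u ∈ (V ⊓ Wᗮ : Submodule ℂ H), u ≠ 0 := by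
    have : Nontrivial (V ⊓ Wᗮ : Submodule ℂ H) := Module.nontrivial_of_finrank_pos (R := ℂ) hdim
    obtain ⟨⟨u, hu⟩, hne⟩ := exists_ne (0 : (V ⊓ Wᗮ : Submodule ℂ H))
    exact ⟨u, hu, fun h0 => hne (Subtype.ext h0)⟩
  have hunorm : ‖u‖ ≠ 0 := norm_ne_zero_iff.mpr hune
  set v : H := (‖u‖ : ℂ)⁻¹ • u with hv
  have hvV : v ∈ V := V.smul_mem _ hu.1
  have hvO : v ∈ Wᗮ := Wᗮ.smul_mem _ hu.2
  have hvnorm : ‖v‖ = 1 := by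
    rw [hv, norm_smul]
    simp [norm_inv, hunorm]
  obtain ⟨w, hwW, hwnorm, hclose⟩ := h v hvV hvnorm
  have horth : inner ℂ v w = (0 : ℂ) := Submodule.inner_left_of_mem_orthogonal hwW hvO
  have hsq : ‖v - w‖ ^ 2 = 2 := by
    rw [@norm_sub_sq ℂ]
    rw [horth]
    rw [hvnorm, hwnorm]; norm_num
  have hε1 : ε ≤ 1 := by
    have hd' : (2 : ℝ) ≤ (Module.finrank ℂ V : ℝ) := by exact_mod_cast hd
    have : (1 : ℝ) ≤ ((Module.finrank ℂ V : ℝ) - 1) ^ 2 := by nlinarith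
    have h4 : (1 : ℝ) / (4 * ((Module.finrank ℂ V : ℝ) - 1) ^ 2) ≤ 1 := by
      rw [div_le_one (by nlinarith)]
      nlinarith
    linarith
  have : ‖v - w‖ ^ 2 ≤ 1 := by nlinarith [norm_nonneg (v - w)]
  linarith
end

section
/- Let H be a finite-dimensional complex inner product space, let V and W be linear subspaces of H with d := dim V ≥ 2, and let ε be a real number with 0 < ε ≤ 1/(4(d−1)²) and ε ≤ (1/36)·(5/2)^{2−2d}. Suppose that for every v ∈ V with ‖v‖ = 1 there exists w ∈ W with ‖w‖ = 1 and ‖v − w‖ ≤ ε. Then there exists a linear isometry f : V → H whose range is contained in W and which satisfies ‖f(v) − v‖ ≤ (8/3)·√ε·(5/2)^d for every v ∈ V with ‖v‖ = 1. -/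
set_option maxHeartbeats 1000000 in
theorem isometry_close_to_identity_for_similar_subspaces
    {H : Type*} [NormedAddCommGroup H] [InnerProductSpace ℂ H] [FiniteDimensional ℂ H]
    (V W : Submodule ℂ H) (hd : 2 ≤ Module.finrank ℂ V)
    (ε : ℝ) (hε0 : 0 < ε)
    (hε1 : ε ≤ 1 / (4 * ((Module.finrank ℂ V : ℝ) - 1) ^ 2))
    (hε2 : ε ≤ (1 / 36) * (5 / 2 : ℝ) ^ (2 - 2 * (Module.finrank ℂ V : ℤ)))
    (h : ∀ v ∈ V, ‖v‖ = 1 → ∃ w ∈ W, ‖w‖ = 1 ∧ ‖v - w‖ ≤ ε) :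
    ∃ f : V →ₗᵢ[ℂ] H, (∀ v : V, f v ∈ W) ∧
      ∀ v : V, ‖(v : H)‖ = 1 →
        ‖f v - (v : H)‖ ≤ (8 / 3) * Real.sqrt ε * (5 / 2 : ℝ) ^ (Module.finrank ℂ V) := by
  classical
  set d := Module.finrank ℂ V with hdd
  -- ε ≤ 1/4
  have hd1 : (1 : ℝ) ≤ (d : ℝ) - 1 := by
    have : (2 : ℝ) ≤ (d : ℝ) := by exact_mod_cast hd
    linarith
  have hε14 : ε ≤ 1 / 4 := by
    refine hε1.trans ?_
    have h4 : (4 : ℝ) ≤ 4 * ((d : ℝ) - 1) ^ 2 := by nlinarith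
    exact one_div_le_one_div_of_le (by norm_num) h4
  have hε1' : ε ≤ 1 := by linarith
  -- the projection map T : V → H
  set T : ↥V →ₗ[ℂ] H :=
    (W.subtype.comp (W.orthogonalProjectionOnto).toLinearMap).comp V.subtype with hT
  have hTapp : ∀ x : ↥V, T x = ((W.orthogonalProjectionOnto (x : H) : ↥W) : H) := fun x => rfl
  have hproj : ∀ (y : H) (w : H), w ∈ W →
      ‖y - ((W.orthogonalProjectionOnto y : ↥W) : H)‖ ≤ ‖y - w‖ := by
    intro y w hw
    rw [← Submodule.starProjection_apply, Submodule.starProjection_minimal]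
    refine ciInf_le_of_le ⟨0, ?_⟩ (⟨w, hw⟩ : ↥W) le_rfl
    rintro z ⟨x, rfl⟩
    positivity
  have hTnorm_le : ∀ x : ↥V, ‖T x‖ ≤ ‖x‖ := by
    intro x
    rw [hTapp]
    calc ‖((W.orthogonalProjectionOnto (x : H) : ↥W) : H)‖
        = ‖W.orthogonalProjectionOnto (x : H)‖ := (Submodule.coe_norm _).symm
      _ ≤ ‖W.orthogonalProjectionOnto‖ * ‖(x : H)‖ := (W.orthogonalProjectionOnto).le_opNorm _
      _ ≤ 1 * ‖(x : H)‖ := by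
          have := Submodule.orthogonalProjectionOnto_norm_le W
          have h0 : (0:ℝ) ≤ ‖(x : H)‖ := norm_nonneg _
          nlinarith
      _ = ‖x‖ := by rw [one_mul, Submodule.coe_norm]
  have hTclose : ∀ x : ↥V, ‖(x : H)‖ = 1 → ‖T x - (x : H)‖ ≤ ε := by
    intro x hx
    obtain ⟨w, hwW, -, hww⟩ := h (x : H) x.2 hx
    rw [hTapp, ← norm_neg]
    simp only [neg_sub]
    exact (hproj (x : H) w hwW).trans hww
  have hTlow : ∀ x : ↥V, ‖(x : H)‖ = 1 → 1 - ε ≤ ‖T x‖ := by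
    intro x hx
    have h1 : ‖(x : H)‖ - ‖T x - (x : H)‖ ≤ ‖T x‖ := by
      have := norm_sub_norm_le (T x) (x : H)
      have h2 := norm_sub_rev (T x) (x : H)
      linarith [abs_le.mp (abs_norm_sub_norm_le (T x) (x : H))]
    have := hTclose x hx
    linarith [hx ▸ h1]
  -- the symmetric operator A = T* T
  have hA : ((LinearMap.adjoint T) ∘ₗ T).IsSymmetric := by
    intro x y
    simp only [LinearMap.comp_apply, LinearMap.adjoint_inner_left, LinearMap.adjoint_inner_right]
  have hn : Module.finrank ℂ ↥V = d := rfl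
  set b := hA.eigenvectorBasis hn with hb
  set μ := hA.eigenvalues hn with hμdef
  have happly : ∀ i, ((LinearMap.adjoint T) ∘ₗ T) (b i) = (μ i : ℂ) • b i :=
    fun i => hA.apply_eigenvectorBasis hn i
  have hbnorm : ∀ i, ‖((b i : ↥V) : H)‖ = 1 := by
    intro i
    rw [← Submodule.coe_norm]
    exact b.orthonormal.1 i
  have hinnerbb : ∀ i j, (inner ℂ (b i) (b j) : ℂ) = if i = j then 1 else 0 :=
    orthonormal_iff_ite.mp b.orthonormal
  have hinnerTT : ∀ i j, (inner ℂ (T (b i)) (T (b j)) : ℂ) = (μ i : ℂ) * if i = j then 1 else 0 := by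
    intro i j
    have h1 : (inner ℂ (T (b i)) (T (b j)) : ℂ) = inner ℂ (((LinearMap.adjoint T) ∘ₗ T) (b i)) (b j) := by
      simp only [LinearMap.comp_apply, LinearMap.adjoint_inner_left]
    rw [h1, happly, inner_smul_left, Complex.conj_ofReal, hinnerbb]
  have hμval : ∀ i, (μ i : ℝ) = ‖T (b i)‖ ^ 2 := by
    intro i
    have h1 := hinnerTT i i
    rw [if_pos rfl, mul_one] at h1
    have h2 : (inner ℂ (T (b i)) (T (b i)) : ℂ) = (‖T (b i)‖ : ℂ) ^ 2 :=
      inner_self_eq_norm_sq_to_K _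
    rw [h2] at h1
    exact_mod_cast h1.symm
  have hμlow : ∀ i, (1 - ε) ^ 2 ≤ μ i := by
    intro i
    rw [hμval]
    have := hTlow (b i) (hbnorm i)
    nlinarith [norm_nonneg (T (b i))]
  have hμhigh : ∀ i, μ i ≤ 1 := by
    intro i
    rw [hμval]
    have h1 := hTnorm_le (b i)
    have h2 : ‖(b i : ↥V)‖ = 1 := b.orthonormal.1 i
    nlinarith [norm_nonneg (T (b i))]
  set s : Fin d → ℝ := fun i => Real.sqrt (μ i) with hs
  have hμ0 : ∀ i, 0 ≤ μ i := fun i => le_trans (by positivity) (hμlow i)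
  have hssq : ∀ i, s i ^ 2 = μ i := fun i => Real.sq_sqrt (hμ0 i)
  have hslow : ∀ i, 1 - ε ≤ s i := by
    intro i
    have h1 : Real.sqrt ((1 - ε) ^ 2) ≤ s i := Real.sqrt_le_sqrt (hμlow i)
    rwa [Real.sqrt_sq (by linarith)] at h1
  have hshigh : ∀ i, s i ≤ 1 := by
    intro i
    have h1 : s i ≤ Real.sqrt 1 := Real.sqrt_le_sqrt (hμhigh i)
    rwa [Real.sqrt_one] at h1
  have hspos : ∀ i, 0 < s i := fun i => lt_of_lt_of_le (by linarith) (hslow i)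
  have hsne : ∀ i, ((s i : ℂ)) ≠ 0 := fun i => by
    exact_mod_cast Complex.ofReal_ne_zero.mpr (hspos i).ne'
  set u : Fin d → H := fun i => ((s i : ℂ))⁻¹ • T (b i) with hu
  have humem : ∀ i, u i ∈ W := by
    intro i
    refine Submodule.smul_mem _ _ ?_
    rw [hTapp]
    exact Submodule.coe_mem _
  have huon : Orthonormal ℂ u := by
    rw [orthonormal_iff_ite]
    intro i j
    have hcast : ∀ k, (μ k : ℂ) = (s k : ℂ) ^ 2 := fun k => by
      rw [← hssq k]; push_cast; ring
    by_cases hij : i = j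
    · subst hij
      simp only [hu, inner_smul_left, inner_smul_right, hinnerTT, map_inv₀,
        Complex.conj_ofReal, if_pos rfl, mul_one, hcast]
      field_simp
      rw [div_self (hsne i)]
    · simp only [hu, inner_smul_left, inner_smul_right, hinnerTT, map_inv₀,
        Complex.conj_ofReal, if_neg hij, mul_zero]
  have hTb : ∀ i, T (b i) = (s i : ℂ) • u i := by
    intro i
    rw [hu]
    simp only
    rw [smul_smul, mul_inv_cancel₀ (hsne i), one_smul]
  set f0 : ↥V →ₗ[ℂ] H := b.toBasis.constr ℂ u with hf0
  have hf0b : ∀ i, f0 (b i) = u i := by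
    intro i
    rw [hf0]
    have := b.toBasis.constr_basis ℂ u i
    rwa [b.coe_toBasis] at this
  have hvon : Orthonormal ℂ ⇑b.toBasis := by rw [b.coe_toBasis]; exact b.orthonormal
  have hfon : Orthonormal ℂ (⇑f0 ∘ ⇑b.toBasis) := by
    have : (⇑f0 ∘ ⇑b.toBasis) = u := by
      funext i
      simp only [Function.comp_apply, b.coe_toBasis]
      exact hf0b i
    rw [this]; exact huon
  have hf0sum : ∀ v : ↥V, f0 v = ∑ i, b.repr v i • u i := by
    intro v
    conv_lhs => rw [← b.sum_repr v]
    rw [map_sum]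
    exact Finset.sum_congr rfl fun i _ => by rw [map_smul, hf0b]
  refine ⟨f0.isometryOfOrthonormal hvon hfon, ?_, ?_⟩
  · intro v
    rw [LinearMap.coe_isometryOfOrthonormal, hf0sum]
    exact Submodule.sum_mem _ fun i _ => Submodule.smul_mem _ _ (humem i)
  · intro v hv
    set c : Fin d → ℂ := fun i => b.repr v i with hc
    -- norm-squared identities via orthonormal families
    have hns : ∀ (w : Fin d → ℂ) (e : Fin d → H), Orthonormal ℂ e →
        ‖∑ i, w i • e i‖ ^ 2 = ∑ i, ‖w i‖ ^ 2 := by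
      intro w e he
      have h1 : (inner ℂ (∑ i, w i • e i) (∑ i, w i • e i) : ℂ)
          = ∑ i, (starRingEnd ℂ) (w i) * w i := he.inner_sum w w Finset.univ
      have h2 : (inner ℂ (∑ i, w i • e i) (∑ i, w i • e i) : ℂ)
          = (‖∑ i, w i • e i‖ : ℂ) ^ 2 := inner_self_eq_norm_sq_to_K _
      have h3 : ∀ i, (starRingEnd ℂ) (w i) * w i = ((‖w i‖ : ℝ) : ℂ) ^ 2 := by
        intro i
        rw [RCLike.conj_mul]
        norm_num
      rw [h2, Finset.sum_congr rfl (fun i _ => h3 i)] at h1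
      have : ((‖∑ i, w i • e i‖ ^ 2 : ℝ) : ℂ) = ((∑ i, ‖w i‖ ^ 2 : ℝ) : ℂ) := by
        push_cast
        exact h1
      exact_mod_cast this
    have hsumc : ∑ i, ‖c i‖ ^ 2 = 1 := by
      have h1 : ‖∑ i, c i • ((b i : ↥V) : H)‖ ^ 2 = ∑ i, ‖c i‖ ^ 2 := by
        refine hns c (fun i => ((b i : ↥V) : H)) ?_
        rw [orthonormal_iff_ite]
        intro i j
        have := hinnerbb i j
        rwa [Submodule.coe_inner] at this
      have h2 : ∑ i, c i • ((b i : ↥V) : H) = (v : H) := by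
        conv_rhs => rw [← b.sum_repr v]
        rw [Submodule.coe_sum]
        exact Finset.sum_congr rfl fun i _ => by rw [Submodule.coe_smul]
      rw [h2, hv] at h1
      rw [← h1]
      norm_num
    -- the error vector x
    have hfv : f0 v = ∑ i, c i • u i := hf0sum v
    have hTv : T v = ∑ i, (c i * (s i : ℂ)) • u i := by
      conv_lhs => rw [← b.sum_repr v]
      rw [map_sum]
      refine Finset.sum_congr rfl fun i _ => ?_
      rw [map_smul, hTb, smul_smul]
    have hdiff : f0 v - T v = ∑ i, (c i * (1 - (s i : ℂ))) • u i := by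
      rw [hfv, hTv, ← Finset.sum_sub_distrib]
      refine Finset.sum_congr rfl fun i _ => ?_
      rw [← sub_smul]
      ring_nf
    have hdiffnorm : ‖f0 v - T v‖ ≤ ε := by
      rw [hdiff]
      have h1 : ‖∑ i, (c i * (1 - (s i : ℂ))) • u i‖ ^ 2
          = ∑ i, ‖c i * (1 - (s i : ℂ))‖ ^ 2 := hns _ u huon
      have h2 : ∀ i, ‖c i * (1 - (s i : ℂ))‖ ^ 2 ≤ ε ^ 2 * ‖c i‖ ^ 2 := by
        intro i
        rw [norm_mul]
        have h3 : ‖(1 - (s i : ℂ))‖ ≤ ε := by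
          have : (1 - (s i : ℂ)) = ((1 - s i : ℝ) : ℂ) := by push_cast; ring
          rw [this, Complex.norm_real, Real.norm_eq_abs, abs_le]
          constructor
          · linarith [hshigh i, hε0.le]
          · linarith [hslow i]
        have h4 : ‖(1 - (s i : ℂ))‖ ^ 2 ≤ ε ^ 2 := pow_le_pow_left₀ (norm_nonneg _) h3 2
        nlinarith [mul_le_mul_of_nonneg_left h4 (sq_nonneg ‖c i‖)]
      have h4 : ∑ i, ‖c i * (1 - (s i : ℂ))‖ ^ 2 ≤ ε ^ 2 := by
        calc ∑ i, ‖c i * (1 - (s i : ℂ))‖ ^ 2 ≤ ∑ i, ε ^ 2 * ‖c i‖ ^ 2 :=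
              Finset.sum_le_sum fun i _ => h2 i
          _ = ε ^ 2 * ∑ i, ‖c i‖ ^ 2 := by rw [Finset.mul_sum]
          _ = ε ^ 2 := by rw [hsumc, mul_one]
      have h5 : ‖∑ i, (c i * (1 - (s i : ℂ))) • u i‖ ^ 2 ≤ ε ^ 2 := h1 ▸ h4
      nlinarith [norm_nonneg (∑ i, (c i * (1 - (s i : ℂ))) • u i), hε0.le]
    -- combine
    have hbound : ‖f0 v - (v : H)‖ ≤ 2 * ε := by
      have h1 : ‖T v - (v : H)‖ ≤ ε := hTclose v hv
      calc ‖f0 v - (v : H)‖ = ‖(f0 v - T v) + (T v - (v : H))‖ := by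
            rw [sub_add_sub_cancel]
        _ ≤ ‖f0 v - T v‖ + ‖T v - (v : H)‖ := norm_add_le _ _
        _ ≤ ε + ε := add_le_add hdiffnorm h1
        _ = 2 * ε := by ring
    have hcoe : (f0.isometryOfOrthonormal hvon hfon) v = f0 v := by
      rw [LinearMap.coe_isometryOfOrthonormal]
    rw [hcoe]
    refine hbound.trans ?_
    have hsqrt : Real.sqrt ε ≤ 1 / 2 := by
      have h1 : Real.sqrt ε ≤ Real.sqrt (1 / 4) := Real.sqrt_le_sqrt hε14
      rwa [show (1 / 4 : ℝ) = (1 / 2) ^ 2 by norm_num, Real.sqrt_sq (by norm_num)] at h1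
    have hεeq : ε = Real.sqrt ε ^ 2 := (Real.sq_sqrt hε0.le).symm
    have hpow : (1 : ℝ) ≤ (5 / 2 : ℝ) ^ d := one_le_pow₀ (by norm_num)
    nlinarith [Real.sqrt_nonneg ε]
end

section
/- Let H be a complex inner product space and let v, w, ṽ, w̃ ∈ H be vectors of norm 1. Then √(1 − |⟨w, v⟩|²) ≥ √(1 − |⟨w̃, ṽ⟩|²) − ‖w − w̃‖ − ‖v − ṽ‖. -/
/-!
Write `s(a, b) = √(1 - |⟨a, b⟩|²)`. For unit vectors `a`, `b` this is the distance from `a` to the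
line `𝕜 b`, attained at the orthogonal projection `⟨b, a⟩ b`. Hence
`s(w', v') ≤ ‖v' - ⟨w, v⟩ w'‖`, and splitting
`v' - ⟨w, v⟩ w' = (v' - v) + (v - ⟨w, v⟩ w) + ⟨w, v⟩ (w - w')` with `|⟨w, v⟩| ≤ 1` bounds the right
side by `‖v - v'‖ + s(w, v) + ‖w - w'‖`.
-/

open scoped InnerProductSpace

section
variable {𝕜 E : Type*} [RCLike 𝕜] [NormedAddCommGroup E] [InnerProductSpace 𝕜 E]

theorem norm_sub_smul_sq_of_norm_eq_one {b : E} (hb : ‖b‖ = 1) (a : E) (c : 𝕜) :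
    ‖a - c • b‖ ^ 2 = ‖a - ⟪b, a⟫_𝕜 • b‖ ^ 2 + ‖⟪b, a⟫_𝕜 - c‖ ^ 2 := by
  have horth : ⟪a - ⟪b, a⟫_𝕜 • b, (⟪b, a⟫_𝕜 - c) • b⟫_𝕜 = 0 := by
    simp [inner_smul_right, inner_sub_left, inner_smul_left, hb]
  have hsplit : a - c • b = (a - ⟪b, a⟫_𝕜 • b) + (⟪b, a⟫_𝕜 - c) • b := by
    rw [sub_smul]; abel
  simp only [sq]
  rw [hsplit, norm_add_sq_eq_norm_sq_add_norm_sq_of_inner_eq_zero _ _ horth, norm_smul, hb,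
    mul_one]

theorem norm_sub_inner_smul_le {b : E} (hb : ‖b‖ = 1) (a : E) (c : 𝕜) :
    ‖a - ⟪b, a⟫_𝕜 • b‖ ≤ ‖a - c • b‖ := by
  refine le_of_sq_le_sq ?_ (norm_nonneg _)
  rw [norm_sub_smul_sq_of_norm_eq_one hb a c]
  exact le_add_of_nonneg_right (sq_nonneg _)

theorem norm_sub_inner_smul_eq_sqrt {a b : E} (ha : ‖a‖ = 1) (hb : ‖b‖ = 1) :
    ‖a - ⟪b, a⟫_𝕜 • b‖ = √(1 - ‖⟪b, a⟫_𝕜‖ ^ 2) := by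
  have h := norm_sub_smul_sq_of_norm_eq_one hb a (0 : 𝕜)
  rw [zero_smul, sub_zero, sub_zero, ha] at h
  rw [← Real.sqrt_sq (norm_nonneg (a - ⟪b, a⟫_𝕜 • b))]
  congr 1
  linarith

end

theorem sqrt_one_sub_inner_sq_perturbation
    {H : Type*} [NormedAddCommGroup H] [InnerProductSpace ℂ H]
    (v w v' w' : H) (hv : ‖v‖ = 1) (hw : ‖w‖ = 1) (hv' : ‖v'‖ = 1) (hw' : ‖w'‖ = 1) :
    Real.sqrt (1 - ‖(inner ℂ w' v' : ℂ)‖ ^ 2) - ‖w - w'‖ - ‖v - v'‖ ≤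
      Real.sqrt (1 - ‖(inner ℂ w v : ℂ)‖ ^ 2) := by
  set c := ⟪w, v⟫_ℂ
  have hc : ‖c‖ ≤ 1 := by simpa [hv, hw] using norm_inner_le_norm (𝕜 := ℂ) w v
  have hsplit : v' - c • w' = (v' - v) + (v - c • w) + c • (w - w') := by
    rw [smul_sub]; abel
  have hfar : ‖v' - c • w'‖ ≤ ‖v - v'‖ + √(1 - ‖c‖ ^ 2) + ‖w - w'‖ := by
    rw [hsplit, ← norm_sub_inner_smul_eq_sqrt hv hw, norm_sub_rev v v']
    refine (norm_add₃_le ..).trans (add_le_add_right ?_ _)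
    rw [norm_smul]
    exact mul_le_of_le_one_left (norm_nonneg _) hc
  have hnear := norm_sub_inner_smul_le hw' v' c
  rw [norm_sub_inner_smul_eq_sqrt hv' hw'] at hnear
  linarith
end

section
/- Let H be a finite-dimensional complex inner product space, let d ≥ 1, let v_1, …, v_d ∈ H be an orthonormal family, and let w_1, …, w_d ∈ H be unit vectors with ‖v_k − w_k‖ ≤ ε for every k, where 0 < ε ≤ (1/36)·(5/2)^{2−2d}. Then the family w_1, …, w_d is linearly independent, and the vectors e_1, …, e_d obtained from w_1, …, w_d by Gram–Schmidt orthonormalization satisfy ‖e_k − v_k‖ ≤ 4√ε·((2/5)·(5/2)^k − 1) + ε for every k ∈ {1, …, d}. -/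
/-!
Write `g = gramSchmidt ℂ w` and `s = √ε`, and count indices from `0`. By strong induction,
`‖g k - w k‖ ≤ 2 s ((5/2)^k - 1)`: `w k - g k` is the sum over `i < k` of the projections of
`w k` onto the lines `ℂ ∙ g i`, of norms `‖⟪g i, w k⟫‖ / ‖g i‖`. Since `v i ⟂ v k`, the numerator
is at most `‖g i - v i‖ + ‖w k - v k‖`, while the smallness of `ε` keeps `‖g i‖ ≥ 2/3`; so each
projection has norm at most `3 s (5/2)^i`, and these sum to exactly `2 s ((5/2)^k - 1)`.
Hence no `g k` vanishes, so `w` is linearly independent, and normalising `g k` moves it by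
`|1 - ‖g k‖| ≤ ‖g k - w k‖`.
-/

open InnerProductSpace

/-- Helper instance (the instance search for `WellFoundedLT (Fin d)` gets stuck
inside `gramSchmidtNormed` otherwise). -/
instance finWellFoundedLT (d : ℕ) : WellFoundedLT (Fin d) := inferInstance

section InnerProductSpace

variable {𝕜 E : Type*} [RCLike 𝕜] [NormedAddCommGroup E] [InnerProductSpace 𝕜 E]

theorem norm_starProjection_singleton (x y : E) :
    ‖(𝕜 ∙ x).starProjection y‖ = ‖⟪x, y⟫_𝕜‖ / ‖x‖ := by
  rcases eq_or_ne x 0 with rfl | hx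
  · simp
  rw [Submodule.starProjection_singleton, norm_smul, norm_div, RCLike.norm_ofReal,
    abs_of_nonneg (by positivity)]
  field_simp

theorem norm_inner_le_norm_sub_add_norm_sub_of_inner_eq_zero {a b x y : E}
    (hab : ⟪a, b⟫_𝕜 = 0) (ha : ‖a‖ ≤ 1) (hy : ‖y‖ ≤ 1) : ‖⟪x, y⟫_𝕜‖ ≤ ‖x - a‖ + ‖y - b‖ := by
  have hsplit : ⟪x, y⟫_𝕜 = ⟪x - a, y⟫_𝕜 + ⟪a, y - b⟫_𝕜 := by
    simp only [inner_sub_left, inner_sub_right, hab]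
    ring
  calc ‖⟪x, y⟫_𝕜‖ ≤ ‖x - a‖ * ‖y‖ + ‖a‖ * ‖y - b‖ := by
        rw [hsplit]
        exact (norm_add_le _ _).trans (add_le_add (norm_inner_le_norm _ _) (norm_inner_le_norm _ _))
    _ ≤ ‖x - a‖ + ‖y - b‖ := by
        gcongr
        · exact mul_le_of_le_one_right (norm_nonneg _) hy
        · exact mul_le_of_le_one_left (norm_nonneg _) ha

theorem norm_inv_norm_smul_sub_self_le {x y : E} (hy : ‖y‖ = 1) :
    ‖(‖x‖ : 𝕜)⁻¹ • x - x‖ ≤ ‖x - y‖ := by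
  rcases eq_or_ne x 0 with rfl | hx
  · simp
  have hx' : ‖x‖ ≠ 0 := norm_ne_zero_iff.mpr hx
  have hsmul : (‖x‖ : 𝕜)⁻¹ • x - x = ((‖x‖⁻¹ - 1 : ℝ) : 𝕜) • x := by
    push_cast
    rw [sub_smul, one_smul]
  calc ‖(‖x‖ : 𝕜)⁻¹ • x - x‖ = |(‖x‖⁻¹ - 1) * ‖x‖| := by
        rw [hsmul, norm_smul, RCLike.norm_ofReal, abs_mul, abs_norm]
    _ = |‖y‖ - ‖x‖| := by rw [sub_one_mul, inv_mul_cancel₀ hx', hy]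
    _ ≤ ‖x - y‖ := by
        rw [abs_sub_comm]
        exact abs_norm_sub_norm_le x y

theorem linearIndependent_of_gramSchmidt_ne_zero {ι : Type*} [LinearOrder ι]
    [LocallyFiniteOrderBot ι] [WellFoundedLT ι] [Fintype ι] {f : ι → E}
    (hf : ∀ i, gramSchmidt 𝕜 f i ≠ 0) : LinearIndependent 𝕜 f := by
  have hg : LinearIndependent 𝕜 (gramSchmidt 𝕜 f) :=
    linearIndependent_of_ne_zero_of_inner_eq_zero hf fun _ _ => gramSchmidt_orthogonal 𝕜 f
  rw [linearIndependent_iff_card_eq_finrank_span] at hg ⊢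
  rwa [Set.finrank, ← span_gramSchmidt 𝕜 f]

variable {d : ℕ} {v w : Fin d → E} {s : ℝ}

theorem norm_starProjection_gramSchmidt_le (hv : Orthonormal 𝕜 v) (hw : ∀ k, ‖w k‖ = 1)
    (hs : 0 ≤ s) (hsmall : ∀ k : Fin d, 6 * s * (5 / 2 : ℝ) ^ (k : ℕ) ≤ 1)
    (hclose : ∀ k, ‖v k - w k‖ ≤ s ^ 2) {i k : Fin d} (hik : i ≠ k)
    (hi : ‖gramSchmidt 𝕜 w i - w i‖ ≤ 2 * s * ((5 / 2 : ℝ) ^ (i : ℕ) - 1)) :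
    ‖(𝕜 ∙ gramSchmidt 𝕜 w i).starProjection (w k)‖ ≤ 3 * s * (5 / 2 : ℝ) ^ (i : ℕ) := by
  have hsi := hsmall i
  have hnorm : 2 / 3 ≤ ‖gramSchmidt 𝕜 w i‖ := by
    have := norm_sub_norm_le (w i) (gramSchmidt 𝕜 w i)
    rw [hw i, norm_sub_rev] at this
    linarith
  have hinner : ‖⟪gramSchmidt 𝕜 w i, w k⟫_𝕜‖ ≤ ‖gramSchmidt 𝕜 w i - w i‖ + 2 * s ^ 2 :=
    calc ‖⟪gramSchmidt 𝕜 w i, w k⟫_𝕜‖ ≤ ‖gramSchmidt 𝕜 w i - v i‖ + ‖w k - v k‖ :=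
          norm_inner_le_norm_sub_add_norm_sub_of_inner_eq_zero (hv.2 hik) (hv.1 i).le (hw k).le
      _ ≤ ‖gramSchmidt 𝕜 w i - w i‖ + ‖w i - v i‖ + ‖w k - v k‖ := by
          gcongr
          exact norm_sub_le_norm_sub_add_norm_sub _ _ _
      _ ≤ ‖gramSchmidt 𝕜 w i - w i‖ + 2 * s ^ 2 := by
          rw [norm_sub_rev (w i), norm_sub_rev (w k)]
          linarith [hclose i, hclose k]
  rw [norm_starProjection_singleton, div_le_iff₀ (by linarith)]
  have hpow : (1 : ℝ) ≤ (5 / 2) ^ (i : ℕ) := one_le_pow₀ (by norm_num)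
  have hs1 : s ^ 2 ≤ s := by nlinarith
  nlinarith [mul_le_mul_of_nonneg_left hnorm (by positivity : 0 ≤ 3 * s * (5 / 2 : ℝ) ^ (i : ℕ))]

theorem norm_gramSchmidt_sub_le (hv : Orthonormal 𝕜 v) (hw : ∀ k, ‖w k‖ = 1)
    (hs : 0 ≤ s) (hsmall : ∀ k : Fin d, 6 * s * (5 / 2 : ℝ) ^ (k : ℕ) ≤ 1)
    (hclose : ∀ k, ‖v k - w k‖ ≤ s ^ 2) (k : Fin d) :
    ‖gramSchmidt 𝕜 w k - w k‖ ≤ 2 * s * ((5 / 2 : ℝ) ^ (k : ℕ) - 1) := by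
  induction k using WellFoundedLT.induction with
  | _ k ih =>
    calc ‖gramSchmidt 𝕜 w k - w k‖
        = ‖∑ i ∈ Finset.Iio k, (𝕜 ∙ gramSchmidt 𝕜 w i).starProjection (w k)‖ := by
          rw [gramSchmidt_def 𝕜 w k, sub_sub_cancel_left, norm_neg]
      _ ≤ ∑ i ∈ Finset.Iio k, 3 * s * (5 / 2 : ℝ) ^ (i : ℕ) :=
          (norm_sum_le _ _).trans <| Finset.sum_le_sum fun i hi =>
            norm_starProjection_gramSchmidt_le hv hw hs hsmall hclose (Finset.mem_Iio.mp hi).ne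
              (ih i (Finset.mem_Iio.mp hi))
      _ = 3 * s * ∑ j ∈ Finset.range k, (5 / 2 : ℝ) ^ j := by
          rw [Finset.mul_sum, ← Nat.Iio_eq_range, ← Fin.map_valEmbedding_Iio, Finset.sum_map]
          rfl
      _ = 2 * s * ((5 / 2 : ℝ) ^ (k : ℕ) - 1) := by
          rw [geom_sum_eq (by norm_num)]
          ring

end InnerProductSpace

theorem six_mul_sqrt_mul_pow_le_one {d : ℕ} {ε : ℝ}
    (hε : ε ≤ (1 / 36) * (5 / 2 : ℝ) ^ (2 - 2 * (d : ℤ))) (k : Fin d) :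
    6 * √ε * (5 / 2 : ℝ) ^ (k : ℕ) ≤ 1 := by
  have hsqrt : √ε ≤ 1 / 6 * (5 / 2 : ℝ) ^ (1 - (d : ℤ)) := by
    refine Real.sqrt_le_iff.mpr ⟨by positivity, hε.trans_eq ?_⟩
    rw [mul_pow, ← zpow_natCast ((5 / 2 : ℝ) ^ (1 - (d : ℤ))), ← zpow_mul]
    ring_nf
  calc 6 * √ε * (5 / 2 : ℝ) ^ (k : ℕ) ≤ (5 / 2 : ℝ) ^ (1 - (d : ℤ)) * (5 / 2 : ℝ) ^ (k : ℕ) := by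
        gcongr
        linarith
    _ = (5 / 2 : ℝ) ^ (1 - (d : ℤ) + (k : ℕ)) := by
        rw [zpow_add₀ (by norm_num), zpow_natCast]
    _ ≤ 1 := zpow_le_one_of_nonpos₀ (by norm_num) (by have := k.isLt; omega)

theorem gramSchmidt_stability_under_perturbation_general
    {H : Type*} [NormedAddCommGroup H] [InnerProductSpace ℂ H]
    (d : ℕ) (v w : Fin d → H)
    (hv : Orthonormal ℂ v) (hw : ∀ k, ‖w k‖ = 1)
    (ε : ℝ) (hε : ε ≤ (1 / 36) * (5 / 2 : ℝ) ^ (2 - 2 * (d : ℤ)))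
    (hclose : ∀ k, ‖v k - w k‖ ≤ ε) :
    LinearIndependent ℂ w ∧
    ∀ k : Fin d, ‖InnerProductSpace.gramSchmidtNormed ℂ w k - v k‖ ≤
      4 * Real.sqrt ε * ((2 / 5) * (5 / 2 : ℝ) ^ ((k : ℕ) + 1) - 1) + ε := by
  have hsmall := six_mul_sqrt_mul_pow_le_one hε
  have hclose_sq (k : Fin d) : ‖v k - w k‖ ≤ √ε ^ 2 := by
    rw [Real.sq_sqrt ((norm_nonneg _).trans (hclose k))]
    exact hclose k
  have hΔ := norm_gramSchmidt_sub_le hv hw (Real.sqrt_nonneg ε) hsmall hclose_sq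
  refine ⟨linearIndependent_of_gramSchmidt_ne_zero fun k hk => ?_, fun k => ?_⟩
  · have := hΔ k
    rw [hk, zero_sub, norm_neg, hw k] at this
    linarith [hsmall k, Real.sqrt_nonneg ε]
  · calc ‖gramSchmidtNormed ℂ w k - v k‖
        ≤ ‖gramSchmidtNormed ℂ w k - gramSchmidt ℂ w k‖ + ‖gramSchmidt ℂ w k - w k‖
          + ‖w k - v k‖ := by
          refine (norm_sub_le_norm_sub_add_norm_sub _ (w k) _).trans ?_
          gcongr
          exact norm_sub_le_norm_sub_add_norm_sub _ _ _
      _ ≤ 2 * ‖gramSchmidt ℂ w k - w k‖ + ε := by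
          have hnormed : ‖gramSchmidtNormed ℂ w k - gramSchmidt ℂ w k‖
              ≤ ‖gramSchmidt ℂ w k - w k‖ := norm_inv_norm_smul_sub_self_le (hw k)
          rw [norm_sub_rev (w k)]
          linarith [hclose k]
      _ ≤ 4 * √ε * ((2 / 5) * (5 / 2 : ℝ) ^ ((k : ℕ) + 1) - 1) + ε := by
          rw [pow_succ]
          linarith [hΔ k]

theorem gramSchmidt_stability_under_perturbation
    {H : Type*} [NormedAddCommGroup H] [InnerProductSpace ℂ H] [FiniteDimensional ℂ H]
    (d : ℕ) (hd : 1 ≤ d) (v w : Fin d → H)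
    (hv : Orthonormal ℂ v) (hw : ∀ k, ‖w k‖ = 1)
    (ε : ℝ) (hε0 : 0 < ε) (hε : ε ≤ (1 / 36) * (5 / 2 : ℝ) ^ (2 - 2 * (d : ℤ)))
    (hclose : ∀ k, ‖v k - w k‖ ≤ ε) :
    LinearIndependent ℂ w ∧
    ∀ k : Fin d, ‖InnerProductSpace.gramSchmidtNormed ℂ w k - v k‖ ≤
      4 * Real.sqrt ε * ((2 / 5) * (5 / 2 : ℝ) ^ ((k : ℕ) + 1) - 1) + ε :=
  gramSchmidt_stability_under_perturbation_general d v w hv hw ε hε hclose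
end

section
/- There exists a function g mapping finite sequences of natural numbers to finite binary strings (lists of Booleans) with the following property: for every N ∈ ℕ and every sequence ℓ_1, …, ℓ_N of natural numbers satisfying the Kraft inequality ∑_{i=1}^N 2^{−ℓ_i} ≤ 1, the code words c_i := g(ℓ_1, …, ℓ_i) for 1 ≤ i ≤ N satisfy: (1) the length of c_i equals ℓ_i for every i; and (2) for all i ≠ j, c_i is not a prefix of c_j. In particular, the i-th code word depends only on ℓ_1, …, ℓ_i and not on the later lengths. -/
namespace BlindPrefixAux

abbrev BS := List Bool

def Incomp (a b : BS) : Prop := ¬ a <+: b ∧ ¬ b <+: a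

lemma Incomp.symm {a b : BS} (h : Incomp a b) : Incomp b a := ⟨h.2, h.1⟩

lemma incomp_of_prefix {w u c : BS} (hwu : Incomp w u) (hwc : w <+: c) : Incomp c u := by
  constructor
  · intro hcu; exact hwu.1 (hwc.trans hcu)
  · intro huc
    rcases List.prefix_or_prefix_of_prefix huc hwc with h | h
    · exact hwu.2 h
    · exact hwu.1 h

def LneQ (a b : BS) : Prop := a.length ≠ b.length

noncomputable def meas (w : BS) : ℝ := ((1:ℝ)/2) ^ w.length

noncomputable def fmeas (l : List BS) : ℝ := (l.map meas).sum

def piece (w : BS) (k : ℕ) : BS := w ++ (List.replicate k false ++ [true])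

def pick (free : List BS) (n : ℕ) : Option BS :=
  (free.filter (fun w => w.length ≤ n)).argmax List.length

def stepCode (free : List BS) (n : ℕ) : BS :=
  match pick free n with
  | none => List.replicate n false
  | some w => w ++ List.replicate (n - w.length) false

def stepFree (free : List BS) (n : ℕ) : List BS :=
  match pick free n with
  | none => free
  | some w => ((List.range (n - w.length)).map (piece w)) ++
      (@List.erase BS instBEqOfDecidableEq free w)

def freeAfter (L : List ℕ) : List BS := L.foldl stepFree [[]]

def g (L : List ℕ) : BS :=
  match L.getLast? with
  | none => []
  | some n => stepCode (freeAfter L.dropLast) n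

lemma not_pref_tf (k m : ℕ) (h : k < m) :
    ¬ (List.replicate k false ++ [true] <+: List.replicate m false) := by
  intro hp
  have hk : k < (List.replicate k false ++ [true]).length := by simp
  have h2 := hp.getElem hk
  rw [List.getElem_concat_length (by simp)] at h2
  rw [List.getElem_replicate] at h2
  simp at h2

lemma not_pref_tt (j k : ℕ) (h : j < k) :
    ¬ (List.replicate j false ++ [true] <+: List.replicate k false ++ [true]) := by
  intro hp
  have hj : j < (List.replicate j false ++ [true]).length := by simp
  have h2 := hp.getElem hj
  rw [List.getElem_concat_length (by simp)] at h2
  rw [List.getElem_append_left (by simpa using h), List.getElem_replicate] at h2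
  simp at h2

lemma piece_incomp (w : BS) {j k : ℕ} (h : j < k) : Incomp (piece w j) (piece w k) := by
  constructor
  · intro hp
    rw [piece, piece, List.prefix_append_right_inj] at hp
    exact not_pref_tt j k h hp
  · intro hp
    have := hp.length_le
    simp [piece] at this
    omega

lemma piece_incomp_code (w : BS) {k m : ℕ} (h : k < m) :
    Incomp (piece w k) (w ++ List.replicate m false) := by
  constructor
  · intro hp
    rw [piece, List.prefix_append_right_inj] at hp
    exact not_pref_tf k m h hp
  · intro hp
    have hlen := hp.length_le
    simp [piece] at hlen
    have hm : k + 1 = m := by omega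
    subst hm
    have heq : w ++ List.replicate (k+1) false = piece w k := by
      apply List.IsPrefix.eq_of_length hp
      simp [piece]
    have hpf : piece w k <+: w ++ List.replicate (k+1) false := heq ▸ List.prefix_refl _
    rw [piece, List.prefix_append_right_inj] at hpf
    exact not_pref_tf k (k+1) (by omega) hpf

lemma geom_list (a : ℕ) : ∀ m : ℕ,
    (((List.range m).map (fun k => ((1:ℝ)/2)^(a+k+1))).sum) = ((1:ℝ)/2)^a - ((1:ℝ)/2)^(a+m)
  | 0 => by simp
  | (m+1) => by
      rw [List.range_succ, List.map_append, List.sum_append, geom_list a m]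
      simp [pow_succ]
      ring

lemma geom_Ico (a : ℕ) : ∀ b : ℕ, a ≤ b →
    (∑ n ∈ Finset.Ico a b, ((1:ℝ)/2)^n) = 2*(((1:ℝ)/2)^a - ((1:ℝ)/2)^b) := by
  intro b
  induction b with
  | zero => intro h; interval_cases a; simp
  | succ b ih =>
      intro h
      rcases Nat.lt_or_ge a (b+1) with h' | h'
      · have hab : a ≤ b := by omega
        rw [Finset.sum_Ico_succ_top hab, ih hab, pow_succ]
        ring
      · have : a = b + 1 := by omega
        subst this
        simp

lemma sum_meas_lt (ns : List ℕ) (hnd : ns.Nodup) (n : ℕ) (h : ∀ m ∈ ns, n < m) :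
    (ns.map (fun m => ((1:ℝ)/2)^m)).sum < ((1:ℝ)/2)^n := by
  set s := ns.toFinset with hs
  have hsum : (ns.map (fun m => ((1:ℝ)/2)^m)).sum = ∑ m ∈ s, ((1:ℝ)/2)^m :=
    (List.sum_toFinset _ hnd).symm
  set B := max (s.sup id + 1) (n+1) with hB
  have hsub : s ⊆ Finset.Ico (n+1) B := by
    intro m hm
    simp only [Finset.mem_Ico]
    constructor
    · have hmm : m ∈ ns := List.mem_toFinset.mp hm
      have := h m hmm
      omega
    · have : m ≤ s.sup id := Finset.le_sup (f := id) hm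
      omega
  have h1 : ∑ m ∈ s, ((1:ℝ)/2)^m ≤ ∑ m ∈ Finset.Ico (n+1) B, ((1:ℝ)/2)^m := by
    apply Finset.sum_le_sum_of_subset_of_nonneg hsub
    intro i _ _; positivity
  have h2 : (∑ m ∈ Finset.Ico (n+1) B, ((1:ℝ)/2)^m) = 2*(((1:ℝ)/2)^(n+1) - ((1:ℝ)/2)^B) :=
    geom_Ico (n+1) B (by omega)
  have h3 : (0:ℝ) < ((1:ℝ)/2)^B := by positivity
  rw [hsum]
  calc ∑ m ∈ s, ((1:ℝ)/2)^m ≤ 2*(((1:ℝ)/2)^(n+1) - ((1:ℝ)/2)^B) := by rw [← h2]; exact h1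
    _ < 2*((1:ℝ)/2)^(n+1) := by nlinarith
    _ = ((1:ℝ)/2)^n := by rw [pow_succ]; ring

lemma nodup_of_pairwise_lneq {free : List BS} (h : List.Pairwise LneQ free) : free.Nodup :=
  h.imp (fun hab => fun e => hab (congrArg List.length e))

lemma pick_some {free : List BS} {n : ℕ} (h1 : List.Pairwise LneQ free)
    (hm : ((1:ℝ)/2)^n ≤ fmeas free) : ∃ w, pick free n = some w := by
  rcases hw : pick free n with _ | w
  · exfalso
    have hfil : free.filter (fun w => w.length ≤ n) = [] := List.argmax_eq_none.mp hw
    have hall : ∀ w ∈ free, n < w.length := by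
      intro w hwf
      by_contra hle
      have hmem : w ∈ free.filter (fun w => w.length ≤ n) := by
        rw [List.mem_filter]; exact ⟨hwf, by simpa using Nat.le_of_not_lt hle⟩
      rw [hfil] at hmem; exact absurd hmem (List.not_mem_nil (a := w))
    have hnd : (free.map List.length).Nodup := List.pairwise_map.mpr h1
    have hlt := sum_meas_lt (free.map List.length) hnd n (by
      intro m hmm
      rcases List.mem_map.mp hmm with ⟨w, hwf, rfl⟩
      exact hall w hwf)
    rw [List.map_map] at hlt
    have heq : (free.map ((fun m => ((1:ℝ)/2)^m) ∘ List.length)).sum = fmeas free := rfl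
    rw [heq] at hlt
    exact absurd hm (not_le.mpr hlt)
  · exact ⟨w, rfl⟩

lemma pick_spec {free : List BS} {n : ℕ} {w : BS} (hw : pick free n = some w) :
    w ∈ free ∧ w.length ≤ n ∧ ∀ u ∈ free, u.length ≤ n → u.length ≤ w.length := by
  have hmem : w ∈ free.filter (fun w => w.length ≤ n) :=
    List.argmax_mem (show w ∈ _ from hw)
  rw [List.mem_filter] at hmem
  refine ⟨hmem.1, by simpa using hmem.2, ?_⟩
  intro u hu hun
  have hu' : u ∈ free.filter (fun w => w.length ≤ n) := by
    rw [List.mem_filter]; exact ⟨hu, by simpa using hun⟩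
  exact List.le_of_mem_argmax hu' (show w ∈ _ from hw)

theorem step_spec (free : List BS) (n : ℕ) (h1 : List.Pairwise LneQ free)
    (h2 : List.Pairwise Incomp free) (hm : ((1:ℝ)/2)^n ≤ fmeas free) :
    (stepCode free n).length = n ∧
    List.Pairwise LneQ (stepFree free n) ∧
    List.Pairwise Incomp (stepFree free n) ∧
    fmeas (stepFree free n) + ((1:ℝ)/2)^n = fmeas free ∧
    (∀ u ∈ stepFree free n, Incomp (stepCode free n) u) ∧
    (∀ d, (∀ u ∈ free, Incomp d u) →
      (∀ u ∈ stepFree free n, Incomp d u) ∧ Incomp d (stepCode free n)) := by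
  obtain ⟨w, hw⟩ := pick_some h1 hm
  obtain ⟨hwf, hwn, hmax⟩ := pick_spec hw
  set m := n - w.length with hmdef
  have hwm : w.length + m = n := by omega
  have hcode : stepCode free n = w ++ List.replicate m false := by
    simp [stepCode, hw, hmdef]
  set er := @List.erase BS instBEqOfDecidableEq free w with her
  have hfree : stepFree free n = ((List.range m).map (piece w)) ++ er := by
    simp [stepFree, hw, her, hmdef]
  have hnd : free.Nodup := nodup_of_pairwise_lneq h1
  have hperm : free.Perm (w :: er) := by convert List.perm_cons_erase hwf
  have hndc : (w :: er).Nodup := hperm.nodup_iff.mp hnd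
  have hmem_erase : ∀ u ∈ er, u ∈ free ∧ u ≠ w := by
    intro u hu
    refine ⟨hperm.mem_iff.mpr (List.mem_cons_of_mem _ hu), ?_⟩
    rintro rfl
    exact (List.nodup_cons.mp hndc).1 hu
  have h1' := (hperm.pairwise_iff (fun h => h.symm)).mp h1
  have h2' := (hperm.pairwise_iff (fun h => Incomp.symm h)).mp h2
  have hwlen : ∀ u ∈ er, w.length ≠ u.length :=
    fun u hu => List.rel_of_pairwise_cons h1' hu
  have hwinc : ∀ u ∈ er, Incomp w u :=
    fun u hu => List.rel_of_pairwise_cons h2' hu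
  have h1e : List.Pairwise LneQ er :=
    List.Pairwise.sublist (List.sublist_cons_self _ _) h1'
  have h2e : List.Pairwise Incomp er :=
    List.Pairwise.sublist (List.sublist_cons_self _ _) h2'
  have hplen : ∀ k, (piece w k).length = w.length + k + 1 := by
    intro k
    simp only [piece, List.length_append, List.length_replicate, List.length_cons,
      List.length_nil]
    omega
  have heraselen : ∀ u ∈ er, u.length ≤ n → u.length < w.length := by
    intro u hu hun
    have h := hmax u (hmem_erase u hu).1 hun
    have := hwlen u hu
    omega
  have hclen : (stepCode free n).length = n := by
    rw [hcode]; simp; omega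
  refine ⟨hclen, ?_, ?_, ?_, ?_, ?_⟩
  · rw [hfree, List.pairwise_append]
    refine ⟨?_, h1e, ?_⟩
    · rw [List.pairwise_map]
      apply (List.pairwise_lt_range (n := m)).imp
      intro a b hab
      rw [LneQ, hplen, hplen]; omega
    · intro a ha u hu
      rcases List.mem_map.mp ha with ⟨k, hk, rfl⟩
      rw [List.mem_range] at hk
      rw [LneQ, hplen]
      rcases Nat.lt_or_ge n u.length with h | h
      · omega
      · have := heraselen u hu h; omega
  · rw [hfree, List.pairwise_append]
    refine ⟨?_, h2e, ?_⟩
    · rw [List.pairwise_map]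
      apply (List.pairwise_lt_range (n := m)).imp
      intro a b hab
      exact piece_incomp w hab
    · intro a ha u hu
      rcases List.mem_map.mp ha with ⟨k, hk, rfl⟩
      exact incomp_of_prefix (hwinc u hu) (List.prefix_append w _)
  · have hsum : fmeas (stepFree free n) =
        (((List.range m).map (piece w)).map meas).sum + fmeas er := by
      rw [hfree, fmeas, List.map_append, List.sum_append]; rfl
    have hpm : (((List.range m).map (piece w)).map meas).sum
        = ((1:ℝ)/2)^w.length - ((1:ℝ)/2)^n := by
      rw [List.map_map]
      have hco : (meas ∘ piece w) = fun k => ((1:ℝ)/2)^(w.length + k + 1) := by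
        funext k; simp [meas, hplen]
      rw [hco]
      have hg := geom_list w.length m
      simpa [hwm] using hg
    have herm : fmeas er = fmeas free - meas w := by
      have hp : (free.map meas).sum = ((w :: er).map meas).sum :=
        List.Perm.sum_eq (hperm.map meas)
      simp only [List.map_cons, List.sum_cons] at hp
      simp only [fmeas]
      linarith
    rw [hsum, hpm, herm, meas]; ring
  · intro u hu
    rw [hfree] at hu
    rw [hcode]
    rcases List.mem_append.mp hu with h | h
    · rcases List.mem_map.mp h with ⟨k, hk, rfl⟩
      rw [List.mem_range] at hk
      exact (piece_incomp_code w hk).symm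
    · exact incomp_of_prefix (hwinc u h) (List.prefix_append w _)
  · intro d hd
    have hdw : Incomp d w := hd w hwf
    constructor
    · intro u hu
      rw [hfree] at hu
      rcases List.mem_append.mp hu with h | h
      · rcases List.mem_map.mp h with ⟨k, hk, rfl⟩
        exact (incomp_of_prefix hdw.symm (List.prefix_append w _)).symm
      · exact hd u (hmem_erase u h).1
    · rw [hcode]
      exact (incomp_of_prefix hdw.symm (List.prefix_append w _)).symm

theorem main_inv (l : List ℕ)
    (hK : ((l.map (fun k => ((1:ℝ)/2)^k)).sum ≤ 1)) :
    ∀ i, ∀ hilen : i ≤ l.length,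
      (List.Pairwise LneQ (freeAfter (l.take i)) ∧
       List.Pairwise Incomp (freeAfter (l.take i)) ∧
       fmeas (freeAfter (l.take i)) = 1 - ((l.take i).map (fun k => ((1:ℝ)/2)^k)).sum) ∧
      (∀ k, (hk : k < i) → (g (l.take (k+1))).length = l[k]'(by omega)) ∧
      (∀ k, k < i → ∀ u ∈ freeAfter (l.take i), Incomp (g (l.take (k+1))) u) ∧
      (∀ j k, j < k → k < i → Incomp (g (l.take (j+1))) (g (l.take (k+1)))) := by
  intro i
  induction i with
  | zero =>
      intro _
      refine ⟨⟨?_, ?_, ?_⟩, ?_, ?_, ?_⟩ <;>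
        simp [freeAfter, fmeas, meas, LneQ, Incomp]
  | succ i ih =>
      intro hi
      have hi' : i < l.length := by omega
      obtain ⟨⟨H1, H2, H3⟩, H4, H5, H6⟩ := ih (by omega)
      set li := l[i]'hi' with hli
      have htake : l.take (i+1) = l.take i ++ [li] := by
        rw [List.take_succ, List.getElem?_eq_getElem hi']
        rfl
      have hFA : freeAfter (l.take (i+1)) = stepFree (freeAfter (l.take i)) li := by
        rw [htake, freeAfter, List.foldl_concat]; rfl
      have hg : g (l.take (i+1)) = stepCode (freeAfter (l.take i)) li := by
        rw [htake, g]
        rw [List.getLast?_concat, List.dropLast_concat]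
      have hS : ((l.take (i+1)).map (fun k => ((1:ℝ)/2)^k)).sum
          = ((l.take i).map (fun k => ((1:ℝ)/2)^k)).sum + ((1:ℝ)/2)^li := by
        rw [htake]; simp
      have hSle : ((l.take (i+1)).map (fun k => ((1:ℝ)/2)^k)).sum ≤ 1 := by
        have hsplit : l = l.take (i+1) ++ l.drop (i+1) := (List.take_append_drop _ _).symm
        have hlsum : (l.map (fun k => ((1:ℝ)/2)^k)).sum
            = ((l.take (i+1)).map (fun k => ((1:ℝ)/2)^k)).sum
              + ((l.drop (i+1)).map (fun k => ((1:ℝ)/2)^k)).sum := by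
          conv_lhs => rw [hsplit]
          rw [List.map_append, List.sum_append]
        have hnn : (0:ℝ) ≤ ((l.drop (i+1)).map (fun k => ((1:ℝ)/2)^k)).sum := by
          apply List.sum_nonneg
          intro x hx
          rcases List.mem_map.mp hx with ⟨a, _, rfl⟩
          positivity
        linarith [hK, hlsum.symm.le]
      have hm : ((1:ℝ)/2)^li ≤ fmeas (freeAfter (l.take i)) := by
        rw [H3]
        have := hS ▸ hSle
        linarith
      obtain ⟨S1, S2, S3, S4, S5, S6⟩ :=
        step_spec (freeAfter (l.take i)) li H1 H2 hm
      refine ⟨⟨?_, ?_, ?_⟩, ?_, ?_, ?_⟩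
      · rw [hFA]; exact S2
      · rw [hFA]; exact S3
      · rw [hFA, hS]; linarith
      · intro k hk
        rcases Nat.lt_or_ge k i with h | h
        · exact H4 k h
        · have hki : k = i := by omega
          subst hki
          rw [hg]; exact S1
      · intro k hk u hu
        rw [hFA] at hu
        rcases Nat.lt_or_ge k i with h | h
        · exact (S6 _ (H5 k h)).1 u hu
        · have hki : k = i := by omega
          subst hki
          rw [hg]; exact S5 u hu
      · intro j k hjk hk
        rcases Nat.lt_or_ge k i with h | h
        · exact H6 j k hjk h
        · have hki : k = i := by omega
          subst hki
          rw [hg]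
          exact (S6 _ (H5 j hjk)).2

end BlindPrefixAux

theorem blind_prefix_coding :
    ∃ g : List ℕ → List Bool,
      ∀ (N : ℕ) (ℓ : Fin N → ℕ),
        (∑ i : Fin N, ((1 : ℝ) / 2) ^ (ℓ i) ≤ 1) →
        (∀ i : Fin N, (g ((List.ofFn ℓ).take (i + 1))).length = ℓ i) ∧
        (∀ i j : Fin N, i ≠ j →
          ¬ (g ((List.ofFn ℓ).take (i + 1)) <+: g ((List.ofFn ℓ).take (j + 1)))) := by
  refine ⟨BlindPrefixAux.g, ?_⟩
  intro N ℓ hK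
  have hlen : (List.ofFn ℓ).length = N := by simp
  have hK' : (((List.ofFn ℓ).map (fun k => ((1:ℝ)/2)^k)).sum ≤ 1) := by
    rw [List.map_ofFn, List.sum_ofFn]
    exact hK
  obtain ⟨_, H4, _, H6⟩ := BlindPrefixAux.main_inv (List.ofFn ℓ) hK' N (by omega)
  constructor
  · intro i
    have h := H4 i (by omega)
    have hget : (List.ofFn ℓ)[(i:ℕ)]'(by omega) = ℓ i := by
      simp
    exact h.trans hget
  · intro i j hij
    rcases Nat.lt_trichotomy (i:ℕ) (j:ℕ) with h | h | h
    · exact (H6 i j h (by omega)).1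
    · exact absurd (Fin.ext h) hij
    · exact (H6 j i h (by omega)).2
end

section
/- Let n ∈ ℕ, let H be a complex inner product space with dim H = 2^n, and let W_1, …, W_N be linear subspaces of H that are pairwise orthogonal (every vector of W_i is orthogonal to every vector of W_j for i ≠ j) and satisfy dim W_i ≥ 1 for every i. Define ℓ_i := n + 1 − ⌈log₂(dim W_i)⌉ for each i. Then ℓ_i ≥ 1 for every i and ∑_{i=1}^N 2^{−ℓ_i} ≤ 1. -/
/-!
Pairwise orthogonal subspaces are independent, so their dimensions `dᵢ` sum to at most `2 ^ n`.
Since `2 ^ ⌈log₂ d⌉ ≤ 2 d`, each Kraft term `2 ^ (-ℓᵢ) = 2 ^ ⌈log₂ dᵢ⌉ / 2 ^ (n + 1)` is at most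
`dᵢ / 2 ^ n`, and summing these bounds gives `1`.
-/

open Module

theorem Nat.pow_clog_le_mul {b d : ℕ} (hb : 0 < b) (hd : 0 < d) : b ^ clog b d ≤ b * d := by
  rcases (clog b d).eq_zero_or_pos with hclog | hclog
  · rw [hclog, pow_zero]
    exact Nat.mul_pos hb hd
  have hb1 : 1 < b := by
    by_contra! h
    simp [clog_of_left_le_one h] at hclog
  have hd1 : 1 < d := by
    by_contra! h
    simp [clog_of_right_le_one h] at hclog
  calc b ^ clog b d = b * b ^ (clog b d - 1) := by
        rw [← _root_.pow_succ', Nat.sub_one_add_one hclog.ne']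
    _ ≤ b * d := Nat.mul_le_mul_left b (pow_pred_clog_lt_self hb1 hd1).le

theorem Nat.two_pow_le_mul_two_pow_sub_clog {n d : ℕ} (hd : 0 < d) (hdn : d ≤ 2 ^ n) :
    2 ^ n ≤ d * 2 ^ (n + 1 - clog 2 d) := by
  have hclog : clog 2 d ≤ n := clog_le_of_le_pow hdn
  refine Nat.le_of_mul_le_mul_right ?_ (Nat.pow_pos (n := clog 2 d) two_pos)
  calc 2 ^ n * 2 ^ clog 2 d ≤ 2 ^ n * (2 * d) := Nat.mul_le_mul_left _ (pow_clog_le_mul two_pos hd)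
    _ = d * 2 ^ (n + 1) := by ring
    _ = d * 2 ^ (n + 1 - clog 2 d) * 2 ^ clog 2 d := by
      rw [mul_assoc, ← pow_add, Nat.sub_add_cancel (by omega)]

theorem one_half_pow_sub_clog_le_div {n d : ℕ} (hd : 0 < d) (hdn : d ≤ 2 ^ n) :
    ((1 : ℝ) / 2) ^ (n + 1 - Nat.clog 2 d) ≤ d / 2 ^ n := by
  have key : (2 : ℝ) ^ n ≤ d * 2 ^ (n + 1 - Nat.clog 2 d) := by
    exact_mod_cast Nat.two_pow_le_mul_two_pow_sub_clog hd hdn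
  rw [div_pow, one_pow, div_le_div_iff₀ (by positivity) (by positivity)]
  linarith

theorem iSupIndep.sum_finrank_le {K V ι : Type*} [DivisionRing K] [AddCommGroup V] [Module K V]
    [FiniteDimensional K V] [Fintype ι] {W : ι → Submodule K V} (hW : iSupIndep W) :
    ∑ i, finrank K (W i) ≤ finrank K V := by
  classical
  rw [← finrank_directSum K fun i => W i]
  exact LinearMap.finrank_le_finrank_of_injective hW.dfinsupp_lsum_injective

theorem kraft_inequality_for_halting_spaces
    {H : Type*} [NormedAddCommGroup H] [InnerProductSpace ℂ H] [FiniteDimensional ℂ H]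
    (n : ℕ) (hdim : Module.finrank ℂ H = 2 ^ n)
    (N : ℕ) (W : Fin N → Submodule ℂ H)
    (horth : ∀ i j, i ≠ j → ∀ v ∈ W i, ∀ w ∈ W j, (inner ℂ v w : ℂ) = 0)
    (hpos : ∀ i, 1 ≤ Module.finrank ℂ (W i)) :
    (∀ i, 1 ≤ n + 1 - Nat.clog 2 (Module.finrank ℂ (W i))) ∧
    ∑ i : Fin N, ((1 : ℝ) / 2) ^ (n + 1 - Nat.clog 2 (Module.finrank ℂ (W i))) ≤ 1 := by
  have hle : ∀ i, finrank ℂ (W i) ≤ 2 ^ n := fun i => hdim ▸ (W i).finrank_le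
  refine ⟨fun i => ?_, ?_⟩
  · have := Nat.clog_le_of_le_pow (hle i)
    omega
  have hindep : iSupIndep W := (OrthogonalFamily.of_pairwise fun i j hij =>
    Submodule.isOrtho_iff_inner_eq.mpr (horth i j hij)).independent
  have hsum : ((∑ i, finrank ℂ (W i) : ℕ) : ℝ) ≤ 2 ^ n := by
    exact_mod_cast hdim ▸ hindep.sum_finrank_le
  calc ∑ i, ((1 : ℝ) / 2) ^ (n + 1 - Nat.clog 2 (finrank ℂ (W i)))
      ≤ ∑ i, (finrank ℂ (W i) : ℝ) / 2 ^ n :=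
        Finset.sum_le_sum fun i _ => one_half_pow_sub_clog_le_div (hpos i) (hle i)
    _ = ((∑ i, finrank ℂ (W i) : ℕ) : ℝ) / 2 ^ n := by push_cast; rw [Finset.sum_div]
    _ ≤ 1 := (div_le_one (by positivity)).mpr hsum
end
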